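/- arXiv:1210.0230 — 8 statements merged into one kernel-verified Lean document; each statement's English description precedes it below -/
import Mathlib

section
/- For all switching players i,j ∈ [h], the Nash paths N_i and N_j are not link-disjoint, i.e., they share at least one common link of the ring. -/
open Finset

/-- The ring with `n` nodes: edges are indexed by `ZMod n`, where edge `e` joins
node `e` to node `e + 1`.  The clockwise arc from node `s` to node `t` consists of
the edges `s, s+1, …, t-1`. -/
def ringArc (n : ℕ) [NeZero n] (s t : ZMod n) : Finset (ZMod n) :=
  Finset.univ.filter fun e => (e - s).val < (t - s).val

/-- A selfish ring routing (SRR) instance on a ring with `n` nodes (hence `n` links),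
with players indexed by a finite type `ι`.  Each link `e` has a linear latency
function `x ↦ a e * x + b e` with nonnegative coefficients, and player `i` must
connect source `s i` to destination `t i` (distinct nodes) along one of the two arcs. -/
structure SRR (n : ℕ) [NeZero n] (ι : Type) [Fintype ι] where
  a : ZMod n → ℝ
  b : ZMod n → ℝ
  a_nonneg : ∀ e, 0 ≤ a e
  b_nonneg : ∀ e, 0 ≤ b e
  s : ι → ZMod n
  t : ι → ZMod n
  st_ne : ∀ i, s i ≠ t i

namespace SRR

variable {n : ℕ} [NeZero n] {ι : Type} [Fintype ι] [DecidableEq ι]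

/-- A routing assigns to each player one of the two arcs between its terminals:
`true` means the clockwise arc from `s i` to `t i`, `false` the complementary arc. -/
def pathOf (I : SRR n ι) (π : ι → Bool) (i : ι) : Finset (ZMod n) :=
  if π i then ringArc n (I.s i) (I.t i) else ringArc n (I.t i) (I.s i)

/-- The number of players whose path uses link `e` under routing `π`. -/
def load (I : SRR n ι) (π : ι → Bool) (e : ZMod n) : ℕ :=
  (Finset.univ.filter fun j => e ∈ I.pathOf π j).card

/-- The latency `ℓ(P, π)` of a set of links `P` under routing `π`. -/
noncomputable def cost (I : SRR n ι) (π : ι → Bool) (P : Finset (ZMod n)) : ℝ :=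
  ∑ e ∈ P, (I.a e * I.load π e + I.b e)

/-- `M(π)`: the maximum latency experienced by a player under routing `π`. -/
noncomputable def Mval (I : SRR n ι) (π : ι → Bool) : ℝ :=
  ⨆ i : ι, I.cost π (I.pathOf π i)

/-- `π` is a Nash equilibrium: no player strictly decreases its latency by
unilaterally switching to the complementary arc. -/
def Nash (I : SRR n ι) (π : ι → Bool) : Prop :=
  ∀ i, I.cost π (I.pathOf π i) ≤
    I.cost (Function.update π i (!(π i))) (I.pathOf (Function.update π i (!(π i))) i)

/-- `π` is an optimal routing: it minimizes the maximum player latency. -/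
def Optimal (I : SRR n ι) (π : ι → Bool) : Prop :=
  ∀ π' : ι → Bool, I.Mval π ≤ I.Mval π'

/-- The set of switching players: those whose path in `πN` differs from their
path in `πQ`. -/
def switching (I : SRR n ι) (πN πQ : ι → Bool) : Finset ι :=
  Finset.univ.filter fun i => I.pathOf πN i ≠ I.pathOf πQ i

/-- `πQ` is an optimal routing chosen, among all optimal routings, to minimize the
number of switching players with respect to the Nash routing `πN`. -/
def MinSwitchOpt (I : SRR n ι) (πN πQ : ι → Bool) : Prop :=
  I.Optimal πQ ∧
    ∀ π' : ι → Bool, I.Optimal π' → (I.switching πN πQ).card ≤ (I.switching πN π').card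

end SRR

section Aux

open Finset

lemma ringArc_mem' {n : ℕ} [NeZero n] {s t e : ZMod n} :
    e ∈ ringArc n s t ↔ (e - s).val < (t - s).val := by
  simp [ringArc]

lemma ringArc_nonempty' {n : ℕ} [NeZero n] {s t : ZMod n} (h : s ≠ t) :
    (ringArc n s t).Nonempty := by
  refine ⟨s, ringArc_mem'.2 ?_⟩
  simp only [sub_self, ZMod.val_zero]
  refine Nat.pos_of_ne_zero (fun hc => h ?_)
  have h0 : t - s = 0 := by rwa [← ZMod.val_eq_zero]
  exact (sub_eq_zero.mp h0).symm

lemma ringArc_compl' {n : ℕ} [NeZero n] {s t : ZMod n} (h : s ≠ t) (e : ZMod n) :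
    e ∈ ringArc n t s ↔ e ∉ ringArc n s t := by
  rw [ringArc_mem', ringArc_mem']
  have hts : t - s ≠ 0 := sub_ne_zero.2 (Ne.symm h)
  set d := (t - s).val with hd
  set x := (e - s).val with hx
  have hdpos : 0 < d := Nat.pos_of_ne_zero (fun hc => hts (by rwa [← ZMod.val_eq_zero]))
  have hdn : d < n := ZMod.val_lt _
  have hxn : x < n := ZMod.val_lt _
  have h1 : (s - t) = -(t - s) := by ring
  have h2 : (s - t).val = n - d := by rw [h1, ZMod.neg_val, if_neg hts]
  have h3 : (e - t) = (e - s) + (s - t) := by ring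
  have h4 : (e - t).val = (x + (n - d)) % n := by rw [h3, ZMod.val_add, h2]
  rw [h4, h2]
  rcases lt_or_ge x d with hc | hc
  · have : (x + (n - d)) % n = x + (n - d) := Nat.mod_eq_of_lt (by omega)
    omega
  · have : (x + (n - d)) % n = x - d := by
      have he : x + (n - d) = (x - d) + n := by omega
      rw [he, Nat.add_mod_right, Nat.mod_eq_of_lt (by omega)]
    omega

namespace SRR

variable {n : ℕ} [NeZero n] {ι : Type} [Fintype ι] [DecidableEq ι]

lemma pathOf_congr (I : SRR n ι) {π π' : ι → Bool} {i : ι} (h : π i = π' i) :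
    I.pathOf π i = I.pathOf π' i := by
  unfold SRR.pathOf; rw [h]

lemma pathOf_compl (I : SRR n ι) {π π' : ι → Bool} {i : ι} (h : π i ≠ π' i) (e : ZMod n) :
    e ∈ I.pathOf π i ↔ e ∉ I.pathOf π' i := by
  unfold SRR.pathOf
  cases hb : π i <;> cases hb' : π' i <;> simp only [hb, hb'] at h ⊢
  · exact absurd rfl h
  · simp only [if_true, if_false]
    exact ringArc_compl' (I.st_ne i) e
  · simp only [if_true, if_false]
    exact ringArc_compl' (Ne.symm (I.st_ne i)) e
  · exact absurd rfl h

lemma load_eq_sum (I : SRR n ι) (π : ι → Bool) (e : ZMod n) :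
    I.load π e = ∑ m, if e ∈ I.pathOf π m then 1 else 0 := by
  unfold SRR.load
  rw [Finset.card_filter]

end SRR

end Aux

/-- for all switching players `i, j`, the Nash paths `N_i` and `N_j`
share at least one common link. -/
theorem srr_switching_paths_not_disjoint {n k : ℕ} [NeZero n] (I : SRR n (Fin k))
    (πN πQ : Fin k → Bool) (hN : I.Nash πN) (hQ : I.MinSwitchOpt πN πQ)
    (i j : Fin k) (hi : i ∈ I.switching πN πQ) (hj : j ∈ I.switching πN πQ) :
    (I.pathOf πN i ∩ I.pathOf πN j).Nonempty := by
  classical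
  rcases eq_or_ne i j with rfl | hij
  · rw [Finset.inter_self]
    unfold SRR.pathOf
    split
    · exact ringArc_nonempty' (I.st_ne i)
    · exact ringArc_nonempty' (Ne.symm (I.st_ne i))
  · by_contra hdisj
    rw [Finset.not_nonempty_iff_eq_empty] at hdisj
    have hdis : ∀ e, e ∈ I.pathOf πN i → e ∉ I.pathOf πN j := fun e he hej =>
      (Finset.eq_empty_iff_forall_notMem.mp hdisj e) (Finset.mem_inter.2 ⟨he, hej⟩)
    have hNi : I.pathOf πN i ≠ I.pathOf πQ i := (Finset.mem_filter.mp hi).2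
    have hNj : I.pathOf πN j ≠ I.pathOf πQ j := (Finset.mem_filter.mp hj).2
    have hbi : πN i ≠ πQ i := fun h => hNi (I.pathOf_congr h)
    have hbj : πN j ≠ πQ j := fun h => hNj (I.pathOf_congr h)
    have hci : ∀ e, e ∈ I.pathOf πN i ↔ e ∉ I.pathOf πQ i := I.pathOf_compl hbi
    have hcj : ∀ e, e ∈ I.pathOf πN j ↔ e ∉ I.pathOf πQ j := I.pathOf_compl hbj
    set π' := Function.update (Function.update πQ i (πN i)) j (πN j) with hπ'
    have hπ'i : π' i = πN i := by
      rw [hπ', Function.update_of_ne hij, Function.update_self]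
    have hπ'j : π' j = πN j := by rw [hπ', Function.update_self]
    have hπ'm : ∀ m, m ≠ i → m ≠ j → π' m = πQ m := fun m hmi hmj => by
      rw [hπ', Function.update_of_ne hmj, Function.update_of_ne hmi]
    have hpi : I.pathOf π' i = I.pathOf πN i := I.pathOf_congr hπ'i
    have hpj : I.pathOf π' j = I.pathOf πN j := I.pathOf_congr hπ'j
    have hpm : ∀ m, m ≠ i → m ≠ j → I.pathOf π' m = I.pathOf πQ m := fun m hmi hmj =>
      I.pathOf_congr (hπ'm m hmi hmj)
    -- load comparison
    have key : ∀ e, (I.load π' e ≤ I.load πQ e) ∧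
        ((e ∈ I.pathOf πN i ∨ e ∈ I.pathOf πN j) → I.load π' e = I.load πQ e) := by
      intro e
      have hsum : ∀ F : Fin k → ℕ, ∑ m, F m =
          F i + (F j + ∑ m ∈ (Finset.univ.erase i).erase j, F m) := by
        intro F
        rw [← Finset.add_sum_erase _ F (Finset.mem_univ i),
            ← Finset.add_sum_erase _ F
              (Finset.mem_erase.2 ⟨Ne.symm hij, Finset.mem_univ j⟩)]
      have hrest : ∀ m ∈ (Finset.univ.erase i).erase j,
          (if e ∈ I.pathOf π' m then 1 else 0) = (if e ∈ I.pathOf πQ m then (1:ℕ) else 0) := by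
        intro m hm
        have hmj : m ≠ j := (Finset.mem_erase.mp hm).1
        have hmi : m ≠ i := (Finset.mem_erase.mp (Finset.mem_erase.mp hm).2).1
        rw [hpm m hmi hmj]
      rw [I.load_eq_sum π' e, I.load_eq_sum πQ e,
        hsum (fun m => if e ∈ I.pathOf π' m then 1 else 0),
        hsum (fun m => if e ∈ I.pathOf πQ m then 1 else 0),
        Finset.sum_congr rfl hrest]
      have hgi : e ∈ I.pathOf πQ i ↔ ¬ e ∈ I.pathOf πN i := iff_not_comm.mp (hci e)
      have hgj : e ∈ I.pathOf πQ j ↔ ¬ e ∈ I.pathOf πN j := iff_not_comm.mp (hcj e)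
      by_cases h1 : e ∈ I.pathOf πN i <;> by_cases h2 : e ∈ I.pathOf πN j
      · exact absurd h2 (hdis e h1)
      · simp [hpi, hpj, h1, h2, hgi, hgj]
      · simp [hpi, hpj, h1, h2, hgi, hgj]
      · constructor
        · simp only [hpi, hpj, if_neg h1, if_neg h2, if_pos (hgi.mpr h1), if_pos (hgj.mpr h2)]
          omega
        · intro h; rcases h with h | h <;> [exact absurd h h1; exact absurd h h2]
    -- cost comparisons
    have term_nonneg : ∀ (π : Fin k → Bool) (e : ZMod n),
        (0:ℝ) ≤ I.a e * I.load π e + I.b e := fun π e =>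
      add_nonneg (mul_nonneg (I.a_nonneg e) (Nat.cast_nonneg _)) (I.b_nonneg e)
    have costle : ∀ P : Finset (ZMod n), I.cost π' P ≤ I.cost πQ P := by
      intro P
      refine Finset.sum_le_sum fun e _ => ?_
      have h := (key e).1
      have := mul_le_mul_of_nonneg_left (Nat.cast_le.2 h : (I.load π' e : ℝ) ≤ I.load πQ e)
        (I.a_nonneg e)
      linarith
    have costeqNi : I.cost π' (I.pathOf πN i) = I.cost πQ (I.pathOf πN i) :=
      Finset.sum_congr rfl fun e he => by rw [(key e).2 (Or.inl he)]
    have costeqNj : I.cost π' (I.pathOf πN j) = I.cost πQ (I.pathOf πN j) :=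
      Finset.sum_congr rfl fun e he => by rw [(key e).2 (Or.inr he)]
    have hsubij : I.pathOf πN i ⊆ I.pathOf πQ j := by
      intro e he
      by_contra hc
      exact (hdis e he) ((hcj e).mpr hc)
    have hsubji : I.pathOf πN j ⊆ I.pathOf πQ i := by
      intro e he
      by_contra hc
      exact (hdis e ((hci e).mpr hc)) he
    have costsubi : I.cost πQ (I.pathOf πN i) ≤ I.cost πQ (I.pathOf πQ j) :=
      Finset.sum_le_sum_of_subset_of_nonneg hsubij (fun e _ _ => term_nonneg πQ e)
    have costsubj : I.cost πQ (I.pathOf πN j) ≤ I.cost πQ (I.pathOf πQ i) :=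
      Finset.sum_le_sum_of_subset_of_nonneg hsubji (fun e _ _ => term_nonneg πQ e)
    haveI : Nonempty (Fin k) := ⟨i⟩
    have hbdd : BddAbove (Set.range fun m : Fin k => I.cost πQ (I.pathOf πQ m)) :=
      (Set.finite_range _).bddAbove
    have hle_M : ∀ m : Fin k, I.cost πQ (I.pathOf πQ m) ≤ I.Mval πQ := fun m =>
      le_ciSup hbdd m
    have hM : I.Mval π' ≤ I.Mval πQ := by
      refine ciSup_le fun m => ?_
      rcases eq_or_ne m i with rfl | hmi
      · rw [hpi, costeqNi]
        exact costsubi.trans (hle_M j)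
      rcases eq_or_ne m j with rfl | hmj
      · rw [hpj, costeqNj]
        exact costsubj.trans (hle_M i)
      · rw [hpm m hmi hmj]
        exact (costle _).trans (hle_M m)
    have hopt' : I.Optimal π' := fun ρ => hM.trans (hQ.1 ρ)
    have hsub : I.switching πN π' ⊆ (I.switching πN πQ).erase i := by
      intro m hm
      have hm' := (Finset.mem_filter.mp hm).2
      have hmi : m ≠ i := by rintro rfl; exact hm' hpi.symm
      have hmj : m ≠ j := by rintro rfl; exact hm' hpj.symm
      refine Finset.mem_erase.2 ⟨hmi, Finset.mem_filter.2 ⟨Finset.mem_univ m, ?_⟩⟩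
      rwa [hpm m hmi hmj] at hm'
    have h1 : (I.switching πN πQ).card ≤ (I.switching πN π').card := hQ.2 π' hopt'
    have h2 : (I.switching πN π').card < (I.switching πN πQ).card :=
      lt_of_le_of_lt (Finset.card_le_card hsub) (Finset.card_erase_lt_of_mem hi)
    omega
end

section
/- Let I=(R,ℓ,(s_i,t_i)_{i∈[k]}) be a selfish ring routing instance with linear latencies, π* an optimal routing, and π^N a Nash equilibrium. Suppose some agent q∈[k] uses the same path in π^N as in π*. Then there exists a selfish ring routing instance I'=(R,ℓ',(s_i,t_i)_{i∈[k]∖{q}}) with linear latency functions ℓ'_e on the same ring, obtained by removing agent q, such that: (1) the routing π^N restricted to the remaining agents, denoted π^N', is a Nash equilibrium for I'; (2) the total ring latencies satisfy ℓ'(R,π^N')=ℓ(R,π^N); and (3) M'(opt') ≤ M(π*), where opt' is an optimal routing for I' and M' denotes the maximum player latency in I'. -/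
open Finset

section Aux

variable {n : ℕ} [NeZero n] {ι : Type} [Fintype ι] [DecidableEq ι]

lemma SRR.cost_nonneg (I : SRR n ι) (π : ι → Bool) (P : Finset (ZMod n)) :
    0 ≤ I.cost π P :=
  Finset.sum_nonneg fun e _ =>
    add_nonneg (mul_nonneg (I.a_nonneg e) (Nat.cast_nonneg _)) (I.b_nonneg e)

lemma SRR.cost_le_Mval (I : SRR n ι) (π : ι → Bool) (i : ι) :
    I.cost π (I.pathOf π i) ≤ I.Mval π :=
  le_ciSup (f := fun i => I.cost π (I.pathOf π i))
    (Set.Finite.bddAbove (Set.finite_range _)) i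

/-- The reduced instance: agent `q` is removed and its contribution along the
edge set `P` is folded into the constant terms. -/
noncomputable def SRR.removeAgent {k : ℕ} (I : SRR n (Fin k)) (P : Finset (ZMod n))
    (q : Fin k) : SRR n {j : Fin k // j ≠ q} where
  a := I.a
  b e := I.b e + (if e ∈ P then I.a e else 0)
  a_nonneg := I.a_nonneg
  b_nonneg e := add_nonneg (I.b_nonneg e)
    (by split_ifs; exacts [I.a_nonneg e, le_rfl])
  s j := I.s j.1
  t j := I.t j.1
  st_ne j := I.st_ne j.1

/-- Extend a routing of the reduced instance back to all agents, routing `q`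
according to the boolean `c`. -/
def extendRouting {k : ℕ} (q : Fin k) (c : Bool)
    (π' : {j : Fin k // j ≠ q} → Bool) : Fin k → Bool :=
  fun i => if h : i = q then c else π' ⟨i, h⟩

end Aux

/-- if some agent `q` uses the same path in the Nash equilibrium `πN`
as in the optimal routing `πQ`, then the agent can be removed, adjusting the (linear)
latency functions, so that the restricted Nash routing remains a Nash equilibrium,
the total ring latency is unchanged, and the optimal value does not increase. -/
theorem srr_remove_nonswitching_agent {n k : ℕ} [NeZero n] (I : SRR n (Fin k))
    (πN πQ : Fin k → Bool) (hN : I.Nash πN) (hQ : I.Optimal πQ)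
    (q : Fin k) (hq : I.pathOf πN q = I.pathOf πQ q) :
    ∃ I' : SRR n {j : Fin k // j ≠ q},
      (∀ j : {j : Fin k // j ≠ q}, I'.s j = I.s j.1) ∧
      (∀ j : {j : Fin k // j ≠ q}, I'.t j = I.t j.1) ∧
      I'.Nash (fun j => πN j.1) ∧
      I'.cost (fun j => πN j.1) Finset.univ = I.cost πN Finset.univ ∧
      (∀ π' : {j : Fin k // j ≠ q} → Bool, I'.Optimal π' → I'.Mval π' ≤ I.Mval πQ) := by
  classical
  set P := I.pathOf πN q with hP
  set I' := I.removeAgent P q with hI'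
  set ext := extendRouting q (πN q) with hext
  -- paths agree between reduced and extended instances
  have path_ext : ∀ (π' : {j : Fin k // j ≠ q} → Bool) (j : {j : Fin k // j ≠ q}),
      I'.pathOf π' j = I.pathOf (ext π') j.1 := by
    intro π' j
    have hb : ext π' j.1 = π' j := dif_neg j.2
    simp only [SRR.pathOf, hb, hI', SRR.removeAgent]
  have path_ext_q : ∀ (π' : {j : Fin k // j ≠ q} → Bool),
      I.pathOf (ext π') q = P := by
    intro π'
    have hb : ext π' q = πN q := dif_pos rfl
    simp only [SRR.pathOf, hb, hP]
  -- load relation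
  have hload : ∀ (π' : {j : Fin k // j ≠ q} → Bool) (e : ZMod n),
      (I.load (ext π') e : ℕ) = I'.load π' e + (if e ∈ P then 1 else 0) := by
    intro π' e
    unfold SRR.load
    rw [Finset.card_filter, Finset.card_filter]
    rw [← Finset.sum_erase_add _ _ (Finset.mem_univ q)]
    congr 1
    · rw [Finset.sum_subtype (p := fun x => x ≠ q) (Finset.univ.erase q)
        (fun x => by simp [Finset.mem_erase]) (fun j => if e ∈ I.pathOf (ext π') j then 1 else 0)]
      refine Finset.sum_congr rfl fun j _ => ?_
      rw [path_ext π' j]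
    · rw [path_ext_q π']
  -- cost relation
  have hcost : ∀ (π' : {j : Fin k // j ≠ q} → Bool) (P₀ : Finset (ZMod n)),
      I'.cost π' P₀ = I.cost (ext π') P₀ := by
    intro π' P₀
    unfold SRR.cost
    refine Finset.sum_congr rfl fun e _ => ?_
    rw [hload π' e]
    show I'.a e * _ + (I.b e + _) = _
    have ha : I'.a e = I.a e := rfl
    rw [ha]
    push_cast
    split_ifs <;> ring
  -- extension of the restriction of πN is πN
  have hextN : ext (fun j => πN j.1) = πN := by
    funext i
    by_cases h : i = q
    · subst h; exact dif_pos rfl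
    · exact dif_neg h
  -- extension commutes with update
  have hext_update : ∀ (j : {j : Fin k // j ≠ q}) (c : Bool),
      ext (Function.update (fun j' : {j : Fin k // j ≠ q} => πN j'.1) j c)
        = Function.update πN j.1 c := by
    intro j c
    funext i
    by_cases h : i = q
    · have hij : i ≠ j.1 := by rw [h]; exact Ne.symm j.2
      have h1 : ext (Function.update (fun j' : {j : Fin k // j ≠ q} => πN j'.1) j c) i
          = πN q := by rw [h]; exact dif_pos rfl
      rw [h1, Function.update_of_ne hij, h]
    · have h1 : ext (Function.update (fun j' : {j : Fin k // j ≠ q} => πN j'.1) j c) i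
          = Function.update (fun j' : {j : Fin k // j ≠ q} => πN j'.1) j c ⟨i, h⟩ :=
        dif_neg h
      rw [h1]
      by_cases h2 : (⟨i, h⟩ : {j' : Fin k // j' ≠ q}) = j
      · have h3 : i = j.1 := by rw [← h2]
        rw [h2, Function.update_self, h3, Function.update_self]
      · have h3 : i ≠ j.1 := fun hh => h2 (Subtype.ext hh)
        rw [Function.update_of_ne h2, Function.update_of_ne h3]
    -- the five conclusions
  refine ⟨I', fun j => rfl, fun j => rfl, ?_, ?_, ?_⟩
  · -- Nash
    intro j
    have h1 : I'.cost (fun j' => πN j'.1) (I'.pathOf (fun j' => πN j'.1) j)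
        = I.cost πN (I.pathOf πN j.1) := by
      rw [hcost, path_ext, hextN]
    set πU := Function.update (fun j' : {j : Fin k // j ≠ q} => πN j'.1) j
      (!((fun j' : {j : Fin k // j ≠ q} => πN j'.1) j)) with hπU
    have hflip : (!((fun j' : {j : Fin k // j ≠ q} => πN j'.1) j)) = !(πN j.1) := rfl
    have h2 : I'.cost πU (I'.pathOf πU j)
        = I.cost (Function.update πN j.1 (!(πN j.1)))
            (I.pathOf (Function.update πN j.1 (!(πN j.1))) j.1) := by
      rw [hcost, path_ext]
      rw [hπU, hflip, hext_update]
    rw [h1, h2]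
    exact hN j.1
  · -- total ring cost
    rw [hcost, hextN]
  · -- optimal value does not increase
    intro π' hopt
    have key : I'.Mval (fun j => πQ j.1) ≤ I.Mval πQ := by
      -- loads of ext restrQ and πQ agree, since pathOf (ext restrQ) q = P = pathOf πQ q
      have hpaths : ∀ i : Fin k,
          I.pathOf (ext fun j => πQ j.1) i = I.pathOf πQ i := by
        intro i
        by_cases h : i = q
        · rw [h, path_ext_q]; exact hq
        · have hb : ext (fun j : {j : Fin k // j ≠ q} => πQ j.1) i = πQ i := dif_neg h
          simp only [SRR.pathOf, hb]
      have hloadQ : ∀ e, I.load (ext fun j => πQ j.1) e = I.load πQ e := by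
        intro e
        unfold SRR.load
        congr 1
        refine Finset.filter_congr fun j _ => ?_
        rw [hpaths j]
      have hcostQ : ∀ P₀, I.cost (ext fun j => πQ j.1) P₀ = I.cost πQ P₀ := by
        intro P₀
        unfold SRR.cost
        refine Finset.sum_congr rfl fun e _ => ?_
        rw [hloadQ e]
      cases isEmpty_or_nonempty {j : Fin k // j ≠ q} with
      | inl hemp =>
        haveI := hemp
        rw [SRR.Mval, iSup, Set.range_eq_empty, Real.sSup_empty]
        exact (I.cost_nonneg πQ (I.pathOf πQ q)).trans (I.cost_le_Mval πQ q)
      | inr hne =>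
        refine ciSup_le fun j => ?_
        rw [hcost, path_ext, hcostQ, hpaths j.1]
        exact I.cost_le_Mval πQ j.1
    exact (hopt (fun j => πQ j.1)).trans key
end

section
/- If h ≥ 1 and ∪_{i∈[h]} N_i ≠ R, then the total ring latency in the Nash equilibrium satisfies ℓ^N(R) ≤ (2 + 2/h)·M(π*), where ℓ^N(R)=ℓ(R,π^N). -/
open Finset

section Aux

open Finset

variable {n : ℕ} [NeZero n]

lemma mem_ringArc {s t e : ZMod n} : e ∈ ringArc n s t ↔ (e - s).val < (t - s).val := by
  simp [ringArc]

lemma addmod_cases (a b m : ℕ) (ha : a < m) (hb : b < m) :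
    (a + b) % m = a + b ∧ a + b < m ∨ (a + b) % m = a + b - m ∧ m ≤ a + b := by
  rcases lt_or_ge (a + b) m with h | h
  · exact Or.inl ⟨Nat.mod_eq_of_lt h, h⟩
  · refine Or.inr ⟨?_, h⟩
    rw [Nat.mod_eq_sub_mod h, Nat.mod_eq_of_lt (by omega)]

lemma val_sub_lt_neg {u d : ZMod n} (hd : d ≠ 0) :
    (u - d).val < (-d).val ↔ ¬ (u.val < d.val) := by
  have hdn : (-d).val = n - d.val := by rw [ZMod.neg_val]; simp [hd]
  have hsub : (u - d).val = (u.val + (n - d.val)) % n := by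
    rw [sub_eq_add_neg, ZMod.val_add, hdn]
  have hu := ZMod.val_lt u
  have hdlt := ZMod.val_lt d
  have hd0 : 0 < d.val := Nat.pos_of_ne_zero (fun h0 => hd ((ZMod.val_eq_zero _).1 h0))
  rcases lt_or_ge u.val d.val with hc | hc
  · have hlt : u.val + (n - d.val) < n := by omega
    rw [hsub, Nat.mod_eq_of_lt hlt, hdn]
    omega
  · have h1 : (u.val + (n - d.val)) = (u.val - d.val) + n := by omega
    rw [hsub, h1, Nat.add_mod_right, Nat.mod_eq_of_lt (by omega), hdn]
    omega

lemma ringArc_compl {s t : ZMod n} (hst : s ≠ t) :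
    ringArc n t s = (ringArc n s t)ᶜ := by
  ext e
  simp only [Finset.mem_compl, mem_ringArc]
  have hd : t - s ≠ 0 := sub_ne_zero.2 (Ne.symm hst)
  have h1 : e - t = (e - s) - (t - s) := by ring
  have h2 : s - t = -(t - s) := by ring
  rw [h1, h2]
  exact val_sub_lt_neg hd

lemma ringArc_interval {σ τ e₀ x y z : ZMod n}
    (he₀ : e₀ ∉ ringArc n σ τ) (hx : x ∈ ringArc n σ τ) (hy : y ∈ ringArc n σ τ)
    (h1 : (x - e₀).val ≤ (z - e₀).val) (h2 : (z - e₀).val ≤ (y - e₀).val) :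
    z ∈ ringArc n σ τ := by
  simp only [mem_ringArc] at he₀ hx hy ⊢
  have hval : ∀ w : ZMod n, (w - σ).val = ((w - e₀).val + (e₀ - σ).val) % n := fun w => by
    have hw : w - σ = (w - e₀) + (e₀ - σ) := by ring
    rw [hw, ZMod.val_add]
  rw [hval] at hx hy ⊢
  have hE := ZMod.val_lt (e₀ - σ)
  rcases addmod_cases (x - e₀).val (e₀ - σ).val n (ZMod.val_lt _) hE with ⟨ex, lx⟩ | ⟨ex, lx⟩ <;>
    rcases addmod_cases (y - e₀).val (e₀ - σ).val n (ZMod.val_lt _) hE with ⟨ey, ly⟩ | ⟨ey, ly⟩ <;>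
      rcases addmod_cases (z - e₀).val (e₀ - σ).val n (ZMod.val_lt _) hE with ⟨ez, lz⟩ | ⟨ez, lz⟩ <;>
        rw [ex] at hx <;> rw [ey] at hy <;> rw [ez] <;> omega

variable {ι : Type} [Fintype ι] [DecidableEq ι]

lemma SRR.pathOf_eq_of_eq (I : SRR n ι) {π π' : ι → Bool} {i : ι} (h : π i = π' i) :
    I.pathOf π i = I.pathOf π' i := by
  unfold SRR.pathOf; rw [h]

lemma SRR.pathOf_compl_s4 (I : SRR n ι) {π π' : ι → Bool} {i : ι}
    (hne : I.pathOf π i ≠ I.pathOf π' i) :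
    I.pathOf π' i = (I.pathOf π i)ᶜ := by
  have hb : π i ≠ π' i := fun h => hne (I.pathOf_eq_of_eq h)
  unfold SRR.pathOf
  cases hπ : π i <;> cases hπ' : π' i <;> rw [hπ, hπ'] at hb <;> simp only [Bool.false_eq_true,
    if_true, if_false] <;>
    first
      | (exfalso; exact hb rfl)
      | exact ringArc_compl (I.st_ne i)
      | exact ringArc_compl (Ne.symm (I.st_ne i))

lemma SRR.load_update (I : SRR n ι) (πN : ι → Bool) (i : ι) {e : ZMod n}
    (he' : e ∈ I.pathOf (Function.update πN i (!(πN i))) i) (he : e ∉ I.pathOf πN i) :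
    I.load (Function.update πN i (!(πN i))) e = I.load πN e + 1 := by
  unfold SRR.load
  have hset : (Finset.univ.filter fun j => e ∈ I.pathOf (Function.update πN i (!(πN i))) j)
      = insert i (Finset.univ.filter fun j => e ∈ I.pathOf πN j) := by
    ext j
    by_cases hj : j = i
    · subst hj; simp [he']
    · have hp : I.pathOf (Function.update πN i (!(πN i))) j = I.pathOf πN j :=
        I.pathOf_eq_of_eq (by rw [Function.update_of_ne hj])
      simp [hj, hp]
  rw [hset, Finset.card_insert_of_notMem (by simp [he])]

lemma SRR.load_decomp (I : SRR n ι) (πN πQ : ι → Bool) (e : ZMod n) :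
    ∃ m : ℕ,
      I.load πN e = ((I.switching πN πQ).filter fun j => e ∈ I.pathOf πN j).card + m ∧
      I.load πQ e = ((I.switching πN πQ).card
          - ((I.switching πN πQ).filter fun j => e ∈ I.pathOf πN j).card) + m := by
  classical
  refine ⟨(((I.switching πN πQ)ᶜ).filter fun j => e ∈ I.pathOf πN j).card, ?_, ?_⟩
  · unfold SRR.load
    rw [← Finset.union_compl (I.switching πN πQ), Finset.filter_union,
      Finset.card_union_of_disjoint (Finset.disjoint_filter_filter disjoint_compl_right)]
  · unfold SRR.load
    rw [← Finset.union_compl (I.switching πN πQ), Finset.filter_union,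
      Finset.card_union_of_disjoint (Finset.disjoint_filter_filter disjoint_compl_right)]
    have h1 : (((I.switching πN πQ)ᶜ).filter fun j => e ∈ I.pathOf πQ j)
        = ((I.switching πN πQ)ᶜ).filter fun j => e ∈ I.pathOf πN j := by
      apply Finset.filter_congr
      intro j hj
      have hpe : I.pathOf πN j = I.pathOf πQ j := by
        have hj' := Finset.mem_compl.1 hj
        simpa [SRR.switching] using hj'
      rw [hpe]
    have h2 : ((I.switching πN πQ).filter fun j => e ∈ I.pathOf πQ j).card
        = (I.switching πN πQ).card
          - ((I.switching πN πQ).filter fun j => e ∈ I.pathOf πN j).card := by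
      have hsplit := Finset.card_filter_add_card_filter_not
        (s := I.switching πN πQ) (p := fun j => e ∈ I.pathOf πN j)
      have heq : ((I.switching πN πQ).filter fun j => e ∈ I.pathOf πQ j)
          = (I.switching πN πQ).filter fun j => ¬ (e ∈ I.pathOf πN j) := by
        apply Finset.filter_congr
        intro j hj
        have hne : I.pathOf πN j ≠ I.pathOf πQ j := by
          simpa [SRR.switching] using hj
        rw [I.pathOf_compl_s4 hne]
        simp
      rw [heq]
      omega
    rw [h1, h2]

end Aux

/-- if `h ≥ 1` and the Nash paths of the switching players do not
cover the ring, then `ℓ^N(R) ≤ (2 + 2/h) * M(πQ)`. -/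
theorem srr_noncovering_ring_latency {n k : ℕ} [NeZero n] (I : SRR n (Fin k))
    (πN πQ : Fin k → Bool) (hN : I.Nash πN) (hQ : I.MinSwitchOpt πN πQ)
    (h1 : 1 ≤ (I.switching πN πQ).card)
    (hcov : (I.switching πN πQ).biUnion (I.pathOf πN) ≠ Finset.univ) :
    I.cost πN Finset.univ ≤ (2 + 2 / ((I.switching πN πQ).card : ℝ)) * I.Mval πQ := by
  classical
  obtain ⟨e₀, he₀⟩ : ∃ e₀, e₀ ∉ (I.switching πN πQ).biUnion (I.pathOf πN) := by
    by_contra hall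
    push_neg at hall
    exact hcov (Finset.eq_univ_iff_forall.2 hall)
  have he₀' : ∀ j ∈ I.switching πN πQ, e₀ ∉ I.pathOf πN j := fun j hj hmem =>
    he₀ (Finset.mem_biUnion.2 ⟨j, hj, hmem⟩)
  have hSne : (I.switching πN πQ).Nonempty := Finset.card_pos.1 h1
  -- choose a switching player i whose Nash path contains every "majority" edge
  obtain ⟨i, hiS, hi⟩ : ∃ i ∈ I.switching πN πQ, ∀ e : ZMod n,
      (I.switching πN πQ).card
        < 2 * ((I.switching πN πQ).filter fun j => e ∈ I.pathOf πN j).card →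
      e ∈ I.pathOf πN i := by
    by_cases hC : ∀ e : ZMod n, ¬ ((I.switching πN πQ).card
        < 2 * ((I.switching πN πQ).filter fun j => e ∈ I.pathOf πN j).card)
    · obtain ⟨i, hi⟩ := hSne
      exact ⟨i, hi, fun e he => absurd he (hC e)⟩
    · push_neg at hC
      set C : Finset (ZMod n) := Finset.univ.filter fun e =>
        (I.switching πN πQ).card
          < 2 * ((I.switching πN πQ).filter fun j => e ∈ I.pathOf πN j).card with hCdef
      have hCne : C.Nonempty := by
        obtain ⟨e, he⟩ := hC
        exact ⟨e, by simp [hCdef, he]⟩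
      obtain ⟨x, hxC, hxmin⟩ := C.exists_min_image (fun e => (e - e₀).val) hCne
      obtain ⟨y, hyC, hymax⟩ := C.exists_max_image (fun e => (e - e₀).val) hCne
      have hx2 := (Finset.mem_filter.1 hxC).2
      have hy2 := (Finset.mem_filter.1 hyC).2
      have hinter : (((I.switching πN πQ).filter fun j => x ∈ I.pathOf πN j)
          ∩ ((I.switching πN πQ).filter fun j => y ∈ I.pathOf πN j)).Nonempty := by
        rw [← Finset.card_pos]
        have hu : (((I.switching πN πQ).filter fun j => x ∈ I.pathOf πN j)
            ∪ ((I.switching πN πQ).filter fun j => y ∈ I.pathOf πN j)).card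
            ≤ (I.switching πN πQ).card :=
          Finset.card_le_card (Finset.union_subset (Finset.filter_subset _ _)
            (Finset.filter_subset _ _))
        have hcu := Finset.card_inter_add_card_union
          ((I.switching πN πQ).filter fun j => x ∈ I.pathOf πN j)
          ((I.switching πN πQ).filter fun j => y ∈ I.pathOf πN j)
        omega
      obtain ⟨i, hi⟩ := hinter
      simp only [Finset.mem_inter, Finset.mem_filter] at hi
      refine ⟨i, hi.1.1, fun z hz => ?_⟩
      have hzC : z ∈ C := Finset.mem_filter.2 ⟨Finset.mem_univ _, hz⟩
      have hzx := hxmin z hzC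
      have hzy := hymax z hzC
      have hie₀ : e₀ ∉ I.pathOf πN i := he₀' i hi.1.1
      have hxN := hi.1.2
      have hyN := hi.2.2
      unfold SRR.pathOf at hie₀ hxN hyN ⊢
      cases hb : πN i <;> rw [hb] at hie₀ hxN hyN <;> simp only [if_true, if_false,
        Bool.false_eq_true] at hie₀ hxN hyN ⊢ <;>
        exact ringArc_interval hie₀ hxN hyN hzx hzy
  -- basic facts about player i
  have hNQ : I.pathOf πN i ≠ I.pathOf πQ i := by
    simpa [SRR.switching] using hiS
  have hQc : I.pathOf πQ i = (I.pathOf πN i)ᶜ := I.pathOf_compl_s4 hNQ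
  -- the Nash inequality for player i
  have hπ'i : Function.update πN i (!(πN i)) i = πQ i := by
    rw [Function.update_self]
    have hb : πN i ≠ πQ i := fun hbeq => hNQ (I.pathOf_eq_of_eq hbeq)
    cases hb1 : πN i <;> cases hb2 : πQ i <;> simp_all
  have hpath' : I.pathOf (Function.update πN i (!(πN i))) i = I.pathOf πQ i :=
    I.pathOf_eq_of_eq hπ'i
  have hcost' : I.cost (Function.update πN i (!(πN i)))
        (I.pathOf (Function.update πN i (!(πN i))) i)
      = I.cost πN (I.pathOf πQ i) + ∑ e ∈ I.pathOf πQ i, I.a e := by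
    rw [hpath']
    unfold SRR.cost
    rw [← Finset.sum_add_distrib]
    apply Finset.sum_congr rfl
    intro e he
    have hload : I.load (Function.update πN i (!(πN i))) e = I.load πN e + 1 := by
      apply I.load_update
      · rw [hpath']; exact he
      · rw [hQc] at he; exact Finset.mem_compl.1 he
    rw [hload]
    push_cast
    ring
  have hnash : I.cost πN (I.pathOf πN i)
      ≤ I.cost πN (I.pathOf πQ i) + ∑ e ∈ I.pathOf πQ i, I.a e := by
    have := hN i
    rw [hcost'] at this
    exact this
  -- the per-edge comparison summed over Q_i
  have hsum : 2 * I.cost πN (I.pathOf πQ i) + (∑ e ∈ I.pathOf πQ i, I.a e)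
      ≤ (2 + 2 / ((I.switching πN πQ).card : ℝ)) * I.cost πQ (I.pathOf πQ i) := by
    unfold SRR.cost
    rw [Finset.mul_sum, ← Finset.sum_add_distrib, Finset.mul_sum]
    apply Finset.sum_le_sum
    intro e he
    have h2n : 2 * ((I.switching πN πQ).filter fun j => e ∈ I.pathOf πN j).card
        ≤ (I.switching πN πQ).card := by
      by_contra hgt
      push_neg at hgt
      have hmem := hi e hgt
      rw [hQc] at he
      exact Finset.mem_compl.1 he hmem
    obtain ⟨m, hfN, hfQ⟩ := I.load_decomp πN πQ e
    have hle : ((I.switching πN πQ).filter fun j => e ∈ I.pathOf πN j).card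
        ≤ (I.switching πN πQ).card := Finset.card_filter_le _ _
    rw [hfN, hfQ, Nat.cast_add, Nat.cast_add, Nat.cast_sub hle]
    have hA := I.a_nonneg e
    have hB := I.b_nonneg e
    have hH : (1 : ℝ) ≤ ((I.switching πN πQ).card : ℝ) := by exact_mod_cast h1
    have hNle : 2 * (((I.switching πN πQ).filter fun j => e ∈ I.pathOf πN j).card : ℝ)
        ≤ ((I.switching πN πQ).card : ℝ) := by exact_mod_cast h2n
    have hM : (0 : ℝ) ≤ (m : ℝ) := Nat.cast_nonneg m
    have hN0 : (0 : ℝ) ≤ (((I.switching πN πQ).filter fun j => e ∈ I.pathOf πN j).card : ℝ) :=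
      Nat.cast_nonneg _
    set H : ℝ := ((I.switching πN πQ).card : ℝ)
    set N : ℝ := (((I.switching πN πQ).filter fun j => e ∈ I.pathOf πN j).card : ℝ)
    have hH0 : (0 : ℝ) < H := by linarith
    have hform : 2 + 2 / H = (2 * H + 2) / H := by field_simp
    rw [hform, div_mul_eq_mul_div, le_div_iff₀ hH0]
    have t2 : (0 : ℝ) ≤ I.a e * ((2 * H + 1) * (H - 2 * N)) :=
      mul_nonneg hA (mul_nonneg (by linarith) (by linarith))
    have t3 : (0 : ℝ) ≤ I.a e * (m : ℝ) := mul_nonneg hA hM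
    nlinarith [t2, t3, hB]
  -- player i's latency in πQ is at most Mval
  have hQlat : I.cost πQ (I.pathOf πQ i) ≤ I.Mval πQ := by
    show I.cost πQ (I.pathOf πQ i) ≤ ⨆ j, I.cost πQ (I.pathOf πQ j)
    exact le_ciSup ((Set.finite_range fun j => I.cost πQ (I.pathOf πQ j)).bddAbove) i
  have hfac : (0 : ℝ) ≤ 2 + 2 / ((I.switching πN πQ).card : ℝ) := by positivity
  have hsplit : I.cost πN Finset.univ
      = I.cost πN (I.pathOf πN i) + I.cost πN (I.pathOf πQ i) := by
    rw [hQc]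
    unfold SRR.cost
    exact (Finset.sum_add_sum_compl _ _).symm
  calc I.cost πN Finset.univ
      = I.cost πN (I.pathOf πN i) + I.cost πN (I.pathOf πQ i) := hsplit
    _ ≤ (I.cost πN (I.pathOf πQ i) + ∑ e ∈ I.pathOf πQ i, I.a e)
          + I.cost πN (I.pathOf πQ i) := by linarith
    _ = 2 * I.cost πN (I.pathOf πQ i) + (∑ e ∈ I.pathOf πQ i, I.a e) := by ring
    _ ≤ (2 + 2 / ((I.switching πN πQ).card : ℝ)) * I.cost πQ (I.pathOf πQ i) := hsum
    _ ≤ (2 + 2 / ((I.switching πN πQ).card : ℝ)) * I.Mval πQ :=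
        mul_le_mul_of_nonneg_left hQlat hfac
end

section
/- Let α be a real constant. If h ≥ 1, ∪_{i∈[h]} N_i ≠ R, and ℓ^N(R) ≤ α·M(π*), then M(π^N) ≤ ((2α + 1/h)/3)·M(π*), where ℓ^N(R)=ℓ(R,π^N). -/
open Finset

namespace SRR

variable {n : ℕ} [NeZero n] {ι : Type} [Fintype ι] [DecidableEq ι]

theorem ringArc_compl_aux {s t e : ZMod n} (h : s ≠ t) :
    ((e - t).val < (s - t).val ↔ ¬ (e - s).val < (t - s).val) := by
  have hd : t - s ≠ 0 := sub_ne_zero.mpr (Ne.symm h)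
  have hdpos : 0 < (t - s).val := ZMod.val_pos.mpr hd
  have hdlt : (t - s).val < n := ZMod.val_lt _
  have hult : (e - s).val < n := ZMod.val_lt _
  have h1 : e - t = (e - s) + (-(t - s)) := by ring
  have h2 : s - t = -(t - s) := by ring
  rw [h1, h2, ZMod.val_add, ZMod.neg_val, if_neg hd]
  rcases Nat.lt_or_ge (e - s).val (t - s).val with hc | hc
  · rw [Nat.mod_eq_of_lt (by omega)]; omega
  · have h3 : (e - s).val + (n - (t - s).val) = ((e - s).val - (t - s).val) + n := by omega
    rw [h3, Nat.add_mod_right, Nat.mod_eq_of_lt (by omega)]; omega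

theorem ringArc_compl {s t : ZMod n} (h : s ≠ t) :
    ringArc n t s = Finset.univ \ ringArc n s t := by
  ext e
  simp only [ringArc, Finset.mem_filter, Finset.mem_sdiff, Finset.mem_univ, true_and]
  exact ringArc_compl_aux h

theorem pathOf_eq_compl (I : SRR n ι) {π π' : ι → Bool} {i : ι} (h : π i ≠ π' i) :
    I.pathOf π' i = Finset.univ \ I.pathOf π i := by
  unfold pathOf
  cases hb : π i <;> cases hb' : π' i <;> simp_all <;>
    first
      | exact ringArc_compl (I.st_ne i)
      | exact ringArc_compl (Ne.symm (I.st_ne i))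
      | exact (ringArc_compl (I.st_ne i)).symm
      | exact (ringArc_compl (Ne.symm (I.st_ne i))).symm

theorem pathOf_update_self (I : SRR n ι) (π : ι → Bool) (p : ι) :
    I.pathOf (Function.update π p (!(π p))) p = Finset.univ \ I.pathOf π p := by
  refine I.pathOf_eq_compl ?_
  simp

theorem pathOf_update_ne (I : SRR n ι) (π : ι → Bool) {p j : ι} (v : Bool) (hj : j ≠ p) :
    I.pathOf (Function.update π p v) j = I.pathOf π j := by
  unfold pathOf
  rw [Function.update_of_ne hj]

theorem load_update_s5 (I : SRR n ι) (π : ι → Bool) (p : ι) {e : ZMod n}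
    (he : e ∉ I.pathOf π p) :
    I.load (Function.update π p (!(π p))) e = I.load π e + 1 := by
  unfold load
  have hset : (Finset.univ.filter fun j => e ∈ I.pathOf (Function.update π p (!(π p))) j)
      = insert p (Finset.univ.filter fun j => e ∈ I.pathOf π j) := by
    ext j
    simp only [Finset.mem_filter, Finset.mem_univ, true_and, Finset.mem_insert]
    by_cases hj : j = p
    · subst hj
      rw [I.pathOf_update_self]
      simp [he]
    · rw [I.pathOf_update_ne π (!(π p)) hj]
      simp [hj]
  rw [hset, Finset.card_insert_of_notMem (by simp [he])]

theorem cost_nonneg_s5 (I : SRR n ι) (π : ι → Bool) (P : Finset (ZMod n)) :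
    0 ≤ I.cost π P := by
  refine Finset.sum_nonneg fun e _ => ?_
  have := I.a_nonneg e; have := I.b_nonneg e
  positivity

end SRR

/-- if `h ≥ 1`, the Nash paths of the switching players do not cover
the ring, and `ℓ^N(R) ≤ α * M(πQ)`, then `M(πN) ≤ ((2α + 1/h)/3) * M(πQ)`. -/
theorem srr_noncovering_alpha {n k : ℕ} [NeZero n] (I : SRR n (Fin k))
    (πN πQ : Fin k → Bool) (hN : I.Nash πN) (hQ : I.MinSwitchOpt πN πQ)
    (h1 : 1 ≤ (I.switching πN πQ).card)
    (hcov : (I.switching πN πQ).biUnion (I.pathOf πN) ≠ Finset.univ)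
    (α : ℝ) (hα : I.cost πN Finset.univ ≤ α * I.Mval πQ) :
    I.Mval πN ≤ ((2 * α + 1 / ((I.switching πN πQ).card : ℝ)) / 3) * I.Mval πQ := by
  classical
  set S := I.switching πN πQ with hS
  obtain ⟨i₀, hi₀⟩ := Finset.card_pos.mp h1
  haveI : Nonempty (Fin k) := ⟨i₀⟩
  set M := I.Mval πQ with hM
  have hbddQ : BddAbove (Set.range fun i => I.cost πQ (I.pathOf πQ i)) :=
    (Set.finite_range _).bddAbove
  have hMQ : ∀ i, I.cost πQ (I.pathOf πQ i) ≤ M := fun i => le_ciSup hbddQ i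
  have hM0 : 0 ≤ M := le_trans (I.cost_nonneg_s5 πQ _) (hMQ i₀)
  have hH1 : (1 : ℝ) ≤ (S.card : ℝ) := by exact_mod_cast h1
  have hHpos : (0 : ℝ) < (S.card : ℝ) := lt_of_lt_of_le one_pos hH1
  refine ciSup_le fun p => ?_
  set Np := I.pathOf πN p with hNp
  set C := Finset.univ \ Np with hC
  set L := I.cost πN Np with hL
  set T := I.cost πN C with hT
  set E0 := C.filter (fun e => I.load πN e = 0) with hE0
  set E1 := C.filter (fun e => ¬ I.load πN e = 0) with hE1
  set A0 := ∑ e ∈ E0, I.a e with hA0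
  set A1 := ∑ e ∈ E1, I.a e with hA1
  -- Nash inequality: L ≤ T + (A0 + A1)
  have hCnp : ∀ e ∈ C, e ∉ Np := fun e he => (Finset.mem_sdiff.mp he).2
  have hcost' : I.cost (Function.update πN p (!(πN p))) C = T + (A0 + A1) := by
    have hsplit : A0 + A1 = ∑ e ∈ C, I.a e := Finset.sum_filter_add_sum_filter_not C _ _
    rw [hsplit, hT]
    unfold SRR.cost
    rw [← Finset.sum_add_distrib]
    refine Finset.sum_congr rfl fun e he => ?_
    rw [I.load_update_s5 πN p (hCnp e he)]
    push_cast
    ring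
  have hnash : L ≤ T + (A0 + A1) := by
    have := hN p
    rwa [← hNp, ← hL, I.pathOf_update_self πN p, ← hC, hcost'] at this
  -- total cost splits
  have htot : L + T ≤ α * M := by
    have : I.cost πN Finset.univ = T + L := by
      rw [hT, hL]
      exact (Finset.sum_sdiff (Finset.subset_univ Np)).symm
    linarith [hα, this.symm.le, this.le]
  -- A1 ≤ T
  have hA1T : A1 ≤ T := by
    have h1' : A1 ≤ ∑ e ∈ E1, (I.a e * I.load πN e + I.b e) := by
      refine Finset.sum_le_sum fun e he => ?_
      have hne : I.load πN e ≠ 0 := (Finset.mem_filter.mp he).2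
      have hge : (1 : ℝ) ≤ (I.load πN e : ℝ) := by exact_mod_cast Nat.one_le_iff_ne_zero.mpr hne
      nlinarith [I.a_nonneg e, I.b_nonneg e]
    have h2' : ∑ e ∈ E1, (I.a e * I.load πN e + I.b e) ≤ T := by
      refine Finset.sum_le_sum_of_subset_of_nonneg (Finset.filter_subset _ _) fun e _ _ => ?_
      have := I.a_nonneg e; have := I.b_nonneg e
      positivity
    linarith
  -- S.card * A0 ≤ M
  have hzero : ∀ e ∈ E0, ∀ j, e ∉ I.pathOf πN j := by
    intro e he j
    have h0 : I.load πN e = 0 := (Finset.mem_filter.mp he).2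
    have := Finset.card_eq_zero.mp h0
    intro hmem
    have : j ∈ Finset.univ.filter fun j => e ∈ I.pathOf πN j :=
      Finset.mem_filter.mpr ⟨Finset.mem_univ j, hmem⟩
    simp_all
  have hQcompl : ∀ j ∈ S, I.pathOf πQ j = Finset.univ \ I.pathOf πN j := by
    intro j hj
    have hne : I.pathOf πN j ≠ I.pathOf πQ j := (Finset.mem_filter.mp hj).2
    refine I.pathOf_eq_compl fun hc => hne ?_
    unfold SRR.pathOf
    rw [hc]
  have hmemQ : ∀ e ∈ E0, ∀ j ∈ S, e ∈ I.pathOf πQ j := by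
    intro e he j hj
    rw [hQcompl j hj]
    exact Finset.mem_sdiff.mpr ⟨Finset.mem_univ e, hzero e he j⟩
  have hloadQ : ∀ e ∈ E0, (S.card : ℝ) ≤ (I.load πQ e : ℝ) := by
    intro e he
    have : S ⊆ Finset.univ.filter fun j => e ∈ I.pathOf πQ j := by
      intro j hj
      exact Finset.mem_filter.mpr ⟨Finset.mem_univ j, hmemQ e he j hj⟩
    exact_mod_cast Finset.card_le_card this
  have hE0Q : E0 ⊆ I.pathOf πQ i₀ := fun e he => hmemQ e he i₀ hi₀
  have hA0M : (S.card : ℝ) * A0 ≤ M := by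
    have h1' : ∑ e ∈ E0, (S.card : ℝ) * I.a e ≤ ∑ e ∈ E0, (I.a e * I.load πQ e + I.b e) := by
      refine Finset.sum_le_sum fun e he => ?_
      have := I.a_nonneg e; have := I.b_nonneg e
      nlinarith [hloadQ e he]
    have h2' : ∑ e ∈ E0, (I.a e * I.load πQ e + I.b e) ≤ I.cost πQ (I.pathOf πQ i₀) := by
      refine Finset.sum_le_sum_of_subset_of_nonneg hE0Q fun e _ _ => ?_
      have := I.a_nonneg e; have := I.b_nonneg e
      positivity
    calc (S.card : ℝ) * A0 = ∑ e ∈ E0, (S.card : ℝ) * I.a e := by rw [hA0, Finset.mul_sum]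
      _ ≤ M := le_trans h1' (le_trans h2' (hMQ i₀))
  -- conclude
  have hA0div : A0 ≤ (1 / (S.card : ℝ)) * M := by
    rw [one_div, inv_mul_eq_div, le_div_iff₀ hHpos]
    linarith [hA0M]
  have h3L : 3 * L ≤ 2 * α * M + (1 / (S.card : ℝ)) * M := by linarith
  have hgoal : ((2 * α + 1 / ((S.card : ℝ))) / 3) * M = (2 * α * M + (1 / (S.card : ℝ)) * M) / 3 := by
    ring
  rw [hgoal]
  linarith
end

section
/- For every h ∈ {3,4,6} and every real β ≥ 0, every point (x,y,z) with x a positive integer, y ∈ [0,1], z ≥ β/h, and g(x,y,z) = 0 satisfies f(x,y,z) ≥ (1+β)/3. -/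
/-- `f(x,y,z) = h/x + x/h − (h/(x(x+1)) − 1/h)·y − z − 2 + β`. -/
noncomputable def srrF (h : ℕ) (β x y z : ℝ) : ℝ :=
  (h : ℝ) / x + x / (h : ℝ) - ((h : ℝ) / (x * (x + 1)) - 1 / (h : ℝ)) * y - z - 2 + β

/-- `g(x,y,z) = 2x/h − 1/x + (2/h + 1/(x(x+1)))·y + 2z − (h−1)/h − β`. -/
noncomputable def srrG (h : ℕ) (β x y z : ℝ) : ℝ :=
  2 * x / (h : ℝ) - 1 / x + (2 / (h : ℝ) + 1 / (x * (x + 1))) * y + 2 * z -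
    ((h : ℝ) - 1) / (h : ℝ) - β

/-- For a natural `x` and any natural `k`, `(x−k)(x−(k+1)) ≥ 0` (integrality gap). -/
lemma srr_int_gap (x k : ℕ) : 0 ≤ ((x:ℝ) - k) * ((x:ℝ) - (k+1)) := by
  rcases le_or_gt x k with h|h
  · have h' : (x:ℝ) ≤ k := by exact_mod_cast h
    nlinarith [Nat.cast_nonneg (α := ℝ) x]
  · have h' : (k:ℝ) + 1 ≤ x := by exact_mod_cast h
    nlinarith [Nat.cast_nonneg (α := ℝ) k]

set_option maxHeartbeats 2000000 in
/-- for `h ∈ {3,4,6}`, `β ≥ 0`, every point `(x,y,z)` with `x` a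
positive integer, `y ∈ [0,1]`, `z ≥ β/h` and `g(x,y,z) = 0` satisfies
`f(x,y,z) ≥ (1+β)/3`. -/
theorem srr_small_h_lower_bound (h : ℕ) (hh : h = 3 ∨ h = 4 ∨ h = 6)
    (β : ℝ) (hβ : 0 ≤ β) (x : ℕ) (hx : 1 ≤ x) (y z : ℝ)
    (hy0 : 0 ≤ y) (hy1 : y ≤ 1) (hz : β / (h : ℝ) ≤ z)
    (hg : srrG h β (x : ℝ) y z = 0) :
    (1 + β) / 3 ≤ srrF h β (x : ℝ) y z := by
  set X : ℝ := (x:ℝ) with hXdef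
  have hX1 : (1:ℝ) ≤ X := by rw [hXdef]; exact_mod_cast hx
  have hX0 : (0:ℝ) < X := by linarith
  have hX0' : X ≠ 0 := ne_of_gt hX0
  have hX1' : X + 1 ≠ 0 := by positivity
  have i12 : 0 ≤ (X - 1) * (X - 2) := by have := srr_int_gap x 1; push_cast at this; linarith
  have i23 : 0 ≤ (X - 2) * (X - 3) := by have := srr_int_gap x 2; push_cast at this; linarith
  have i34 : 0 ≤ (X - 3) * (X - 4) := by have := srr_int_gap x 3; push_cast at this; linarith
  rcases hh with rfl | rfl | rfl
  · -- h = 3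
    have hz3 : 0 ≤ 3 * z - β := by nlinarith [(div_le_iff₀ (by norm_num : (0:ℝ) < 3)).mp hz]
    have hG : 2*X^2*(X+1) - 3*(X+1) + (2*X*(X+1)+3)*y + 6*X*(X+1)*z - 2*X*(X+1) - 3*β*X*(X+1)
        = srrG 3 β X y z * (3*X*(X+1)) := by
      rw [srrG]; push_cast; field_simp; ring
    rw [hg, zero_mul] at hG
    have key : srrF 3 β X y z - (1+β)/3
        = (27*(X+1) + 3*X^2*(X+1) - 3*(9 - X*(X+1))*y - 9*X*(X+1)*z - 18*X*(X+1)
            + 9*β*X*(X+1) - (1+β)*3*X*(X+1)) / (9*X*(X+1)) := by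
      rw [srrF]; push_cast; field_simp; ring
    have hden : (0:ℝ) < 9*X*(X+1) := by positivity
    have hnum : 0 ≤ 27*(X+1) + 3*X^2*(X+1) - 3*(9 - X*(X+1))*y - 9*X*(X+1)*z - 18*X*(X+1)
        + 9*β*X*(X+1) - (1+β)*3*X*(X+1) := by
      nlinarith [hG, mul_nonneg hy0 (mul_nonneg (sub_nonneg.mpr hX1) (by linarith : (0:ℝ) ≤ X + 2)),
        mul_nonneg (mul_nonneg hX0.le (by linarith : (0:ℝ) ≤ X+1)) hz3,
        mul_nonneg i12 (by linarith : (0:ℝ) ≤ X + 1)]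
    have := div_nonneg hnum hden.le
    linarith [key ▸ this]
  · -- h = 4
    have hz4 : 0 ≤ 4 * z - β := by nlinarith [(div_le_iff₀ (by norm_num : (0:ℝ) < 4)).mp hz]
    have hG : 2*X^2*(X+1) - 4*(X+1) + (2*X*(X+1)+4)*y + 8*X*(X+1)*z - 3*X*(X+1) - 4*β*X*(X+1)
        = srrG 4 β X y z * (4*X*(X+1)) := by
      rw [srrG]; push_cast; field_simp; ring
    rw [hg, zero_mul] at hG
    have key : srrF 4 β X y z - (1+β)/3
        = (48*(X+1) + 3*X^2*(X+1) - 3*(16 - X*(X+1))*y - 12*X*(X+1)*z - 24*X*(X+1)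
            + 12*β*X*(X+1) - (1+β)*4*X*(X+1)) / (12*X*(X+1)) := by
      rw [srrF]; push_cast; field_simp; ring
    have hden : (0:ℝ) < 12*X*(X+1) := by positivity
    have hnum : 0 ≤ 48*(X+1) + 3*X^2*(X+1) - 3*(16 - X*(X+1))*y - 12*X*(X+1)*z - 24*X*(X+1)
        + 12*β*X*(X+1) - (1+β)*4*X*(X+1) := by
      nlinarith [hG, hz4, hβ, hy0, hy1,
        mul_nonneg (mul_nonneg hy0 hX0.le) i12,
        mul_nonneg (mul_nonneg (mul_nonneg hy0 hX0.le) hX0.le) i12,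
        mul_nonneg (by linarith : (0:ℝ) ≤ 1 - y) (mul_nonneg i23 hX0.le),
        mul_nonneg (by linarith : (0:ℝ) ≤ 1 - y) i23,
        mul_nonneg (by linarith : (0:ℝ) ≤ 1 - y) (mul_nonneg i34 hX0.le),
        mul_nonneg (mul_nonneg hX0.le (by linarith : (0:ℝ) ≤ X+1)) hz4,
        mul_nonneg (mul_nonneg hX0.le hX0.le) hz4,
        mul_nonneg hX0.le hz4,
        mul_nonneg hy0 hz4, mul_nonneg (by linarith : (0:ℝ) ≤ 1 - y) hz4,
        mul_nonneg i12 hX0.le,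
        mul_nonneg hβ (mul_nonneg hX0.le (by linarith : (0:ℝ) ≤ X+1)),
        mul_nonneg hβ hy0, mul_nonneg hβ (by linarith : (0:ℝ) ≤ 1 - y)]
    have := div_nonneg hnum hden.le
    linarith [key ▸ this]
  · -- h = 6
    have hz6 : 0 ≤ 6 * z - β := by nlinarith [(div_le_iff₀ (by norm_num : (0:ℝ) < 6)).mp hz]
    have hG : 2*X^2*(X+1) - 6*(X+1) + (2*X*(X+1)+6)*y + 12*X*(X+1)*z - 5*X*(X+1) - 6*β*X*(X+1)
        = srrG 6 β X y z * (6*X*(X+1)) := by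
      rw [srrG]; push_cast; field_simp; ring
    rw [hg, zero_mul] at hG
    have key : srrF 6 β X y z - (1+β)/3
        = (108*(X+1) + 3*X^2*(X+1) - 3*(36 - X*(X+1))*y - 18*X*(X+1)*z - 36*X*(X+1)
            + 18*β*X*(X+1) - (1+β)*6*X*(X+1)) / (18*X*(X+1)) := by
      rw [srrF]; push_cast; field_simp; ring
    have hden : (0:ℝ) < 18*X*(X+1) := by positivity
    have hnum : 0 ≤ 108*(X+1) + 3*X^2*(X+1) - 3*(36 - X*(X+1))*y - 18*X*(X+1)*z - 36*X*(X+1)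
        + 18*β*X*(X+1) - (1+β)*6*X*(X+1) := by
      nlinarith [hG, hz6, hβ, hy0, hy1,
        mul_nonneg (mul_nonneg (mul_nonneg hy0 hX0.le) hX0.le) i23,
        mul_nonneg (mul_nonneg hy0 hX0.le) i23,
        mul_nonneg (by linarith : (0:ℝ) ≤ 1 - y) (mul_nonneg i34 hX0.le),
        mul_nonneg (by linarith : (0:ℝ) ≤ 1 - y) i34,
        mul_nonneg (mul_nonneg hX0.le (by linarith : (0:ℝ) ≤ X+1)) hz6,
        mul_nonneg i12 hX0.le,
        mul_nonneg hβ (mul_nonneg hX0.le (by linarith : (0:ℝ) ≤ X+1))]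
    have := div_nonneg hnum hden.le
    linarith [key ▸ this]
end

section
/- For every integer h ≥ 7 and every real β ≥ 0, every point (1,y,z) with y ∈ [0,1] and z ∈ ℝ satisfying g(1,y,z) = 0 satisfies f(1,y,z) > (1+β)/3. -/
/-- for every integer `h ≥ 7` and real `β ≥ 0`, every point
`(1,y,z)` with `y ∈ [0,1]` and `g(1,y,z) = 0` satisfies `f(1,y,z) > (1+β)/3`. -/
theorem srr_x_eq_one_lower_bound (h : ℕ) (hh : 7 ≤ h) (β : ℝ) (hβ : 0 ≤ β)
    (y z : ℝ) (hy0 : 0 ≤ y) (hy1 : y ≤ 1) (hg : srrG h β 1 y z = 0) :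
    (1 + β) / 3 < srrF h β 1 y z := by
  have hh' : (7 : ℝ) ≤ (h : ℝ) := by exact_mod_cast hh
  have hpos : (0 : ℝ) < (h : ℝ) := by linarith
  unfold srrG at hg
  unfold srrF
  field_simp at hg ⊢
  nlinarith [mul_pos hpos hpos, sq_nonneg ((h:ℝ) - 7), mul_nonneg hy0 hpos.le,
    mul_nonneg (sub_nonneg.2 hy1) (mul_pos hpos hpos).le, mul_nonneg hβ hpos.le,
    mul_nonneg (mul_nonneg hβ hpos.le) hpos.le,
    mul_nonneg (mul_nonneg hy0 hpos.le) hpos.le]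
end

section
/- For every integer h ≥ 7 and every real β ≥ 0, every point (x,y,z) with real x ≥ 1, y ∈ [0,1], z ≥ β/h, and g(x,y,z) = 0 satisfies f(x,y,z) ≥ (1+β)/3. -/
set_option maxHeartbeats 1000000 in
/-- for every integer `h ≥ 7` and real `β ≥ 0`, every point
`(x,y,z)` with real `x ≥ 1`, `y ∈ [0,1]`, `z ≥ β/h` and `g(x,y,z) = 0` satisfies
`f(x,y,z) ≥ (1+β)/3`. -/
theorem srr_large_h_lower_bound (h : ℕ) (hh : 7 ≤ h) (β : ℝ) (hβ : 0 ≤ β)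
    (x y z : ℝ) (hx : 1 ≤ x) (hy0 : 0 ≤ y) (hy1 : y ≤ 1) (hz : β / (h : ℝ) ≤ z)
    (hg : srrG h β x y z = 0) :
    (1 + β) / 3 ≤ srrF h β x y z := by
  set H : ℝ := (h : ℝ) with hHdef
  have hH : (7:ℝ) ≤ H := by rw [hHdef]; exact_mod_cast hh
  have hx0 : (0:ℝ) < x := by linarith
  have hx1 : (0:ℝ) < x + 1 := by linarith
  have hH0 : (0:ℝ) < H := by linarith
  have hxne : x ≠ 0 := ne_of_gt hx0
  have hx1ne : x + 1 ≠ 0 := ne_of_gt hx1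
  have hHne : H ≠ 0 := ne_of_gt hH0
  have hs : (0:ℝ) ≤ H - 7 := by linarith
  have ht : (0:ℝ) ≤ x - 1 := by linarith
  -- solve for z from g = 0
  have hzval : z = (β + (H-1)/H + 1/x - 2*x/H - (2/H + 1/(x*(x+1)))*y)/2 := by
    simp only [srrG] at hg
    linarith
  -- polynomial form of g = 0
  have hGm : 2*x*x*(x+1) - H*(x+1) + (2*x*(x+1) + H)*y + 2*z*H*x*(x+1)
      - (H-1)*x*(x+1) - β*H*x*(x+1) = 0 := by
    rw [hzval]; field_simp; ring
  -- polynomial form of z ≥ β/H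
  have hC2 : 0 ≤ 2*z*H*x*(x+1) - 2*β*x*(x+1) := by
    have h1 : β ≤ z * H := by
      have := (div_le_iff₀ hH0).mp hz
      linarith
    nlinarith [mul_nonneg (sub_nonneg.mpr h1) (mul_pos hx0 hx1).le]
  -- the two key polynomial inequalities
  have hq : 0 ≤ 6*H^3 - 34*H^2 - 18*H^2*x + 58*H + 66*H*x + 14*H*x^2 - 30 - 54*x - 24*x^2 := by
    nlinarith [mul_nonneg hs (sq_nonneg (x-9)), sq_nonneg (H-x-4),
      mul_nonneg hs (sq_nonneg (2*H-3*x-9)), sq_nonneg (-H+2*x-1), sq_nonneg (-2*H+2*x+9)]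
  have hD0 : 0 ≤ 6*H + 44*H*x + 52*H*x^2 + 14*H*x^3 - 16*H^2 - 34*H^2*x - 18*H^2*x^2
      + 6*H^3 + 6*H^3*x - 6*x - 30*x^2 - 24*x^3 := by
    linarith [mul_nonneg (mul_nonneg hs hs) ht,
      mul_nonneg hs (mul_nonneg ht (mul_nonneg ht ht)),
      mul_nonneg hs (sq_nonneg (-3*H+3*x+13)),
      sq_nonneg (-2*H-x+18), mul_nonneg ht (sq_nonneg (-2*H-x+18)),
      sq_nonneg (-2*H+2*x+4), sq_nonneg (-2*H+2*x+5),
      sq_nonneg (-2*H+3*x+2), mul_nonneg hs (sq_nonneg (-2*H+3*x+2)),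
      mul_nonneg ht (sq_nonneg (-2*H+3*x+2)),
      mul_nonneg (mul_nonneg hs ht) (sq_nonneg (-2*H+3*x+2)),
      mul_nonneg hs (sq_nonneg (-2*H+3*x+3))]
  -- combine: D ≥ 0
  have hD : 0 ≤ 6*H - 6*H*y + 44*H*x + 14*H*x*y + 52*H*x^2 + 14*H*x^2*y + 14*H*x^3
      - 16*H^2 + 16*H^2*y - 34*H^2*x - 18*H^2*x^2 + 6*H^3 - 6*H^3*y + 6*H^3*x
      - 6*x - 24*x*y - 30*x^2 - 24*x^2*y - 24*x^3 := by
    have e1 : 0 ≤ (1 - y) * (6*H + 44*H*x + 52*H*x^2 + 14*H*x^3 - 16*H^2 - 34*H^2*x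
        - 18*H^2*x^2 + 6*H^3 + 6*H^3*x - 6*x - 30*x^2 - 24*x^3) :=
      mul_nonneg (by linarith) hD0
    have e2 : 0 ≤ y * (x * (6*H^3 - 34*H^2 - 18*H^2*x + 58*H + 66*H*x + 14*H*x^2
        - 30 - 54*x - 24*x^2)) :=
      mul_nonneg hy0 (mul_nonneg hx0.le hq)
    nlinarith [e1, e2]
  -- main inequality in multiplied-out form
  have key : 0 ≤ (H/x + x/H - (H/(x*(x+1)) - 1/H)*y - z - 2 + β - (1+β)/3)
      * (6*H*x*(x+1)*(H-2)) := by
    have hid : (H/x + x/H - (H/(x*(x+1)) - 1/H)*y - z - 2 + β - (1+β)/3)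
        * (6*H*x*(x+1)*(H-2))
        = (6*H - 6*H*y + 44*H*x + 14*H*x*y + 52*H*x^2 + 14*H*x^2*y + 14*H*x^3
          - 16*H^2 + 16*H^2*y - 34*H^2*x - 18*H^2*x^2 + 6*H^3 - 6*H^3*y + 6*H^3*x
          - 6*x - 24*x*y - 30*x^2 - 24*x^2*y - 24*x^3)
          + H*(2*z*H*x*(x+1) - 2*β*x*(x+1))
          + (6 - 4*H)*(2*x*x*(x+1) - H*(x+1) + (2*x*(x+1) + H)*y + 2*z*H*x*(x+1)
            - (H-1)*x*(x+1) - β*H*x*(x+1)) := by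
      field_simp
      ring
    rw [hid, hGm]
    nlinarith [hD, hC2, mul_nonneg hH0.le hC2]
  have hc : (0:ℝ) < 6*H*x*(x+1)*(H-2) := by
    have : (0:ℝ) < H - 2 := by linarith
    positivity
  simp only [srrF]
  nlinarith [key, hc]
end

section
/- If h = 1, i.e., exactly one player uses a different path in the Nash equilibrium π^N than in the optimal routing π*, then M(π^N) ≤ 2·M(π*). -/
open Finset

/-- if exactly one player uses a different path in the Nash
equilibrium than in the optimal routing (`h = 1`), then `M(πN) ≤ 2 * M(πQ)`. -/
theorem srr_h_eq_one {n k : ℕ} [NeZero n] (I : SRR n (Fin k))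
    (πN πQ : Fin k → Bool) (hN : I.Nash πN) (hQ : I.MinSwitchOpt πN πQ)
    (hh : (I.switching πN πQ).card = 1) :
    I.Mval πN ≤ 2 * I.Mval πQ := by
  classical
  obtain ⟨i0, hi0⟩ := Finset.card_eq_one.mp hh
  -- the two arcs between distinct nodes are distinct
  have arc_ne : ∀ s t : ZMod n, s ≠ t → ringArc n s t ≠ ringArc n t s := by
    intro s t hst h
    have hs : s ∈ ringArc n s t := by
      have hts : t - s ≠ 0 := sub_ne_zero.mpr (Ne.symm hst)
      simp only [ringArc, Finset.mem_filter, Finset.mem_univ, true_and, sub_self, ZMod.val_zero]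
      exact Nat.pos_of_ne_zero fun h0 => hts ((ZMod.val_eq_zero _).mp h0)
    have hs' : s ∉ ringArc n t s := by
      simp [ringArc]
    rw [h] at hs
    exact hs' hs
  have hne : ∀ j, j ≠ i0 → I.pathOf πN j = I.pathOf πQ j := by
    intro j hj
    by_contra h
    have hmem : j ∈ I.switching πN πQ := by
      simp [SRR.switching, h]
    rw [hi0, Finset.mem_singleton] at hmem
    exact hj hmem
  have hi0ne : I.pathOf πN i0 ≠ I.pathOf πQ i0 := by
    have : i0 ∈ I.switching πN πQ := by rw [hi0]; exact Finset.mem_singleton_self _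
    simpa [SRR.switching] using this
  -- booleans agree iff paths agree
  have path_inj : ∀ (π π' : Fin k → Bool) j, I.pathOf π j = I.pathOf π' j → π j = π' j := by
    intro π π' j h
    have hst := I.st_ne j
    cases h1 : π j <;> cases h2 : π' j <;> simp only [SRR.pathOf, h1, h2, if_true, if_false] at h ⊢
    · exact absurd h (arc_ne _ _ (Ne.symm hst))
    · exact absurd h (arc_ne _ _ hst)
  have bool_ne : πN i0 ≠ πQ i0 := by
    intro h
    exact hi0ne (by simp [SRR.pathOf, h])
  have hupQ : Function.update πN i0 (!(πN i0)) = πQ := by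
    funext j
    rcases eq_or_ne j i0 with rfl | hj
    · rw [Function.update_self]
      cases h1 : πN j <;> cases h2 : πQ j <;> simp_all
    · rw [Function.update_of_ne hj]
      exact path_inj _ _ j (hne j hj)
  -- basic positivity facts
  have cost_nonneg : ∀ (π : Fin k → Bool) (P : Finset (ZMod n)), 0 ≤ I.cost π P := by
    intro π P
    apply Finset.sum_nonneg
    intro e _
    have := I.a_nonneg e
    have := I.b_nonneg e
    positivity
  have le_Mval : ∀ (π : Fin k → Bool) (i : Fin k), I.cost π (I.pathOf π i) ≤ I.Mval π := by
    intro π i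
    rw [SRR.Mval]
    exact le_ciSup (f := fun j => I.cost π (I.pathOf π j)) (Set.Finite.bddAbove (Set.finite_range _)) i
  have MQ_nonneg : 0 ≤ I.Mval πQ :=
    (cost_nonneg πQ (I.pathOf πQ i0)).trans (le_Mval πQ i0)
  -- Nash condition at i0: the deviation is exactly the optimal routing
  have cN0 : I.cost πN (I.pathOf πN i0) ≤ I.Mval πQ := by
    have h := hN i0
    rw [hupQ] at h
    exact h.trans (le_Mval πQ i0)
  -- load comparison
  set N0 : Finset (ZMod n) := I.pathOf πN i0 with hN0
  have load_le1 : ∀ e, e ∈ N0 → I.load πN e ≤ I.load πQ e + 1 := by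
    intro e _
    have hsub : (Finset.univ.filter fun j => e ∈ I.pathOf πN j) ⊆
        insert i0 (Finset.univ.filter fun j => e ∈ I.pathOf πQ j) := by
      intro j hj
      rcases eq_or_ne j i0 with rfl | hj'
      · exact Finset.mem_insert_self _ _
      · apply Finset.mem_insert_of_mem
        simp only [Finset.mem_filter, Finset.mem_univ, true_and] at hj ⊢
        rwa [← hne j hj']
    calc I.load πN e ≤ (insert i0 (Finset.univ.filter fun j => e ∈ I.pathOf πQ j)).card :=
          Finset.card_le_card hsub
      _ ≤ I.load πQ e + 1 := Finset.card_insert_le _ _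
  have load_le0 : ∀ e, e ∉ N0 → I.load πN e ≤ I.load πQ e := by
    intro e he
    apply Finset.card_le_card
    intro j hj
    simp only [Finset.mem_filter, Finset.mem_univ, true_and] at hj ⊢
    rcases eq_or_ne j i0 with rfl | hj'
    · exact absurd hj he
    · rwa [← hne j hj']
  have load_one : ∀ e, e ∈ N0 → 1 ≤ I.load πN e := by
    intro e he
    apply Finset.card_pos.mpr
    exact ⟨i0, by simp only [Finset.mem_filter, Finset.mem_univ, true_and]; exact he⟩
  -- sum of a-coefficients over N0
  have aN_le : ∑ e ∈ N0, I.a e ≤ I.cost πN N0 := by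
    apply Finset.sum_le_sum
    intro e he
    have h1 : (1 : ℝ) ≤ I.load πN e := by exact_mod_cast load_one e he
    nlinarith [I.a_nonneg e, I.b_nonneg e]
  have aN_le' : ∑ e ∈ N0, I.a e ≤ I.Mval πQ :=
    aN_le.trans cN0
  -- cost comparison for arbitrary path collections
  have cost_bound : ∀ P : Finset (ZMod n),
      I.cost πN P ≤ I.cost πQ P + ∑ e ∈ N0, I.a e := by
    intro P
    have step : I.cost πN P ≤ ∑ e ∈ P, (I.a e * I.load πQ e + I.b e + if e ∈ N0 then I.a e else 0) := by
      apply Finset.sum_le_sum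
      intro e _
      by_cases he : e ∈ N0
      · simp only [he, if_true]
        have h1 : (I.load πN e : ℝ) ≤ (I.load πQ e : ℝ) + 1 := by
          exact_mod_cast load_le1 e he
        nlinarith [I.a_nonneg e]
      · simp only [he, if_false]
        have h1 : (I.load πN e : ℝ) ≤ (I.load πQ e : ℝ) := by
          exact_mod_cast load_le0 e he
        nlinarith [I.a_nonneg e]
    refine step.trans ?_
    rw [Finset.sum_add_distrib]
    apply add_le_add_right
    rw [Finset.sum_ite_mem]
    exact Finset.sum_le_sum_of_subset_of_nonneg (Finset.inter_subset_right)
      (fun e _ _ => I.a_nonneg e)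
  -- put everything together
  haveI : Nonempty (Fin k) := ⟨i0⟩
  apply ciSup_le
  intro i
  rcases eq_or_ne i i0 with rfl | hi
  · linarith [cN0]
  · have hpath : I.pathOf πN i = I.pathOf πQ i := hne i hi
    calc I.cost πN (I.pathOf πN i)
        ≤ I.cost πQ (I.pathOf πN i) + ∑ e ∈ N0, I.a e := cost_bound _
      _ = I.cost πQ (I.pathOf πQ i) + ∑ e ∈ N0, I.a e := by rw [hpath]
      _ ≤ I.Mval πQ + I.Mval πQ := add_le_add (le_Mval πQ i) aN_le'
      _ = 2 * I.Mval πQ := by ring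
end
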